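/- For real numbers a, b, c with a² + b² + c² = 1, one has |I₉(a,b,c)| = √6/3888 if and only if (a,b,c) is a permutation of (1/√2, −1/√2, 0). -/
import Mathlib

set_option maxHeartbeats 1600000


/-- Restriction of the degree-9 fundamental invariant to normalized semi-simple states. -/
noncomputable def I₉ (a b c : ℝ) : ℝ :=
  -(Real.sqrt 3 / 243) * (a - b) * (a - c) * (b - c) *
    (a ^ 2 + a * b + b ^ 2) * (a ^ 2 + a * c + c ^ 2) * (b ^ 2 + b * c + c ^ 2)

private lemma quad_nonneg (x y : ℝ) : 0 ≤ x ^ 2 + x * y + y ^ 2 := by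
  nlinarith [sq_nonneg (x + y), sq_nonneg x, sq_nonneg y]

private lemma abs_of_sq {y k : ℝ} (hk : 0 ≤ k) (hyk : y ^ 2 = k ^ 2) : |y| = k := by
  have h0 : (y - k) * (y + k) = 0 := by linear_combination hyk
  rcases mul_eq_zero.mp h0 with h1 | h1
  · rw [abs_eq hk]; left; linarith
  · rw [abs_eq hk]; right; linarith

private lemma abs_val (x : ℝ) (hx : x ^ 2 = 1 / 2) :
    |2 * Real.sqrt 3 * x ^ 9 / 243| = Real.sqrt 6 / 3888 := by
  have hs3 : Real.sqrt 3 ^ 2 = 3 := Real.sq_sqrt (by norm_num)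
  have hs6 : Real.sqrt 6 ^ 2 = 6 := Real.sq_sqrt (by norm_num)
  have hx18 : x ^ 18 = 1 / 512 := by
    rw [show x ^ 18 = (x ^ 2) ^ 9 from by ring, hx]; norm_num
  refine abs_of_sq (by positivity) ?_
  linear_combination (4 * x ^ 18 / 59049) * hs3 + (12 / 59049) * hx18
    + (-(1 / 15116544)) * hs6

private lemma Hpos (y : ℝ) (h0 : 0 ≤ y) (h1 : y ≤ 1) :
    0 ≤ 3 + 3 * y - 189 * y ^ 2 + 963 * y ^ 3 - 1917 * y ^ 4 + 1875 * y ^ 5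
      - 861 * y ^ 6 + 147 * y ^ 7 := by
  have h2 : 0 ≤ 1 - y := by linarith
  have A : ∀ i j : ℕ, 0 ≤ y ^ i * (1 - y) ^ j := fun i j =>
    mul_nonneg (pow_nonneg h0 i) (pow_nonneg h2 j)
  nlinarith [A 0 14, A 1 13, A 2 12, A 3 11, A 4 10, A 5 9, A 6 8, A 7 7, A 8 6,
    A 9 5, A 10 4, A 11 3, A 12 2, A 13 1, A 14 0]

private lemma Gge3 (x : ℝ) (h0 : 0 ≤ x) (h1 : 3 * x ≤ 1) :
    3 ≤ 27 - 324 * x + 1836 * x ^ 2 - 2430 * x ^ 3 - 27702 * x ^ 4 + 125388 * x ^ 5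
      - 26244 * x ^ 6 - 688905 * x ^ 7 + 964467 * x ^ 8 := by
  have hy0 : 0 ≤ 1 - 3 * x := by linarith
  have hH := Hpos (1 - 3 * x) hy0 (by linarith)
  nlinarith [mul_nonneg hy0 hH]

private lemma core (x y z : ℝ) (h : x ^ 2 + y ^ 2 + z ^ 2 = 1) (hE : x - 2 * y + z = 0)
    (hX : ((x - y) * (x - z) * (y - z) * (x ^ 2 + x * y + y ^ 2) * (x ^ 2 + x * z + z ^ 2)
      * (y ^ 2 + y * z + z ^ 2)) ^ 2 = 1 / 128) :
    y = 0 ∧ z = -x := by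
  have hz : z = 2 * y - x := by linarith
  subst hz
  have he : 2 * (x - y) ^ 2 = 1 - 3 * y ^ 2 := by linear_combination h
  have hb2 : y ^ 2 * (27 - 324 * y ^ 2 + 1836 * y ^ 4 - 2430 * y ^ 6 - 27702 * y ^ 8
      + 125388 * y ^ 10 - 26244 * y ^ 12 - 688905 * y ^ 14 + 964467 * y ^ 16) = 0 := by
    linear_combination (-128) * hX + ((321489)*y^16 + (-214326)*y^14*(x-y)^2 + (-122472)*y^14
      + (142884)*y^12*(x-y)^4 + (10206)*y^12*(x-y)^2 + (-49572)*y^12 + (29160)*y^10*(x-y)^6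
      + (40824)*y^10*(x-y)^4 + (36450)*y^10*(x-y)^2 + (25272)*y^10 + (-19440)*y^8*(x-y)^8
      + (-17496)*y^8*(x-y)^6 + (-10692)*y^8*(x-y)^4 + (-4698)*y^8*(x-y)^2 + (-810)*y^8
      + (12960)*y^6*(x-y)^10 + (5184)*y^6*(x-y)^8 + (1296)*y^6*(x-y)^6 + (-432)*y^6*(x-y)^4
      + (-1026)*y^6*(x-y)^2 + (-1080)*y^6 + (576)*y^4*(x-y)^12 + (864)*y^4*(x-y)^10
      + (864)*y^4*(x-y)^8 + (720)*y^4*(x-y)^6 + (540)*y^4*(x-y)^4 + (378)*y^4*(x-y)^2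
      + (252)*y^4 + (-384)*y^2*(x-y)^14 + (-384)*y^2*(x-y)^12 + (-288)*y^2*(x-y)^10
      + (-192)*y^2*(x-y)^8 + (-120)*y^2*(x-y)^6 + (-72)*y^2*(x-y)^4 + (-42)*y^2*(x-y)^2
      + (-24)*y^2 + (256)*(x-y)^16 + (128)*(x-y)^14 + (64)*(x-y)^12 + (32)*(x-y)^10
      + (16)*(x-y)^8 + (8)*(x-y)^6 + (4)*(x-y)^4 + (2)*(x-y)^2 + (1)) * he
  have h13 : 3 * y ^ 2 ≤ 1 := by nlinarith [sq_nonneg (x - y), he]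
  have hGy := Gge3 (y ^ 2) (sq_nonneg y) h13
  have hy2 : y ^ 2 ≤ 0 := by nlinarith [hb2, hGy, sq_nonneg y]
  have hy0 : y ^ 2 = 0 := le_antisymm hy2 (sq_nonneg y)
  have hy : y = 0 := by
    exact pow_eq_zero_iff (by norm_num : (2 : ℕ) ≠ 0) |>.mp hy0
  exact ⟨hy, by rw [hy]; ring⟩

private lemma ms_pattern (x : ℝ) (hx : x ^ 2 = 1 / 2) :
    ({x, -x, 0} : Multiset ℝ) = {1 / Real.sqrt 2, -(1 / Real.sqrt 2), 0} := by
  have hs2 : Real.sqrt 2 ^ 2 = 2 := Real.sq_sqrt (by norm_num)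
  have ht2 : (1 / Real.sqrt 2) ^ 2 = 1 / 2 := by rw [div_pow, hs2]; norm_num
  have h0 : (x - 1 / Real.sqrt 2) * (x + 1 / Real.sqrt 2) = 0 := by
    linear_combination hx - ht2
  rcases mul_eq_zero.mp h0 with h1 | h1
  · have hx1 : x = 1 / Real.sqrt 2 := by linarith
    rw [hx1]
  · have hx1 : x = -(1 / Real.sqrt 2) := by linarith
    rw [hx1, neg_neg]
    exact Multiset.cons_swap _ _ _

private lemma ms1 (x : ℝ) : ({x, 0, -x} : Multiset ℝ) = {x, -x, 0} :=
  congrArg _ (Multiset.cons_swap _ _ _)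

private lemma ms2 (x : ℝ) : ({0, x, -x} : Multiset ℝ) = {x, -x, 0} :=
  (Multiset.cons_swap 0 x {-x}).trans (ms1 x)

private lemma chain (Q N : ℝ) (hQ : 0 ≤ Q) (hN : 0 ≤ N) (hN3 : N ≤ 3)
    (hq1 : 8 * (Q * N) ≤ 3) : Q ^ 2 * N ^ 3 ≤ 27 / 64 := by
  have hQN : 0 ≤ Q * N := mul_nonneg hQ hN
  nlinarith [mul_nonneg (mul_nonneg hN (by linarith : (0:ℝ) ≤ 3 - 8 * (Q * N)))
    (by linarith : (0:ℝ) ≤ 3 + 8 * (Q * N)), hN3, hN, hQN]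

/-- `|I₉| = √6/3888` on the unit sphere exactly at permutations of `(1/√2, -1/√2, 0)`. -/
theorem abs_I₉_eq_max_iff (a b c : ℝ) (h : a ^ 2 + b ^ 2 + c ^ 2 = 1) :
    |I₉ a b c| = Real.sqrt 6 / 3888 ↔
      ({a, b, c} : Multiset ℝ) = {1 / Real.sqrt 2, -(1 / Real.sqrt 2), 0} := by
  have hs3 : Real.sqrt 3 ^ 2 = 3 := Real.sq_sqrt (by norm_num)
  have hs6 : Real.sqrt 6 ^ 2 = 6 := Real.sq_sqrt (by norm_num)
  constructor
  · intro habs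
    have hsq : (I₉ a b c) ^ 2 = (Real.sqrt 6 / 3888) ^ 2 := by
      rw [← sq_abs, habs]
    unfold I₉ at hsq
    have hX : ((a - b) * (a - c) * (b - c) * (a ^ 2 + a * b + b ^ 2) * (a ^ 2 + a * c + c ^ 2)
        * (b ^ 2 + b * c + c ^ 2)) ^ 2 = 1 / 128 := by
      linear_combination 19683 * hsq
        + (-(((a - b) * (a - c) * (b - c) * (a ^ 2 + a * b + b ^ 2) * (a ^ 2 + a * c + c ^ 2)
          * (b ^ 2 + b * c + c ^ 2)) ^ 2) / 3) * hs3 + (19683 / 15116544) * hs6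
    -- notation-free inequality chain
    have hQ : 0 ≤ (a ^ 2 + a * b + b ^ 2) * ((a ^ 2 + a * c + c ^ 2) * (b ^ 2 + b * c + c ^ 2)) :=
      mul_nonneg (quad_nonneg a b) (mul_nonneg (quad_nonneg a c) (quad_nonneg b c))
    have hN : 0 ≤ 3 * (a ^ 2 + b ^ 2 + c ^ 2) - (a + b + c) ^ 2 := by
      nlinarith [sq_nonneg (a - b), sq_nonneg (a - c), sq_nonneg (b - c)]
    have hN3 : 3 * (a ^ 2 + b ^ 2 + c ^ 2) - (a + b + c) ^ 2 ≤ 3 := by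
      nlinarith [sq_nonneg (a + b + c)]
    have hsosnn : 0 ≤ (a + b + c) ^ 2 * (2 * (a * b * c) ^ 2
        + 2 * ((b * c * (b - c)) ^ 2 + (a * c * (c - a)) ^ 2 + (a * b * (a - b)) ^ 2)
        + (1 / 3) * ((3 * (a ^ 2 * (b + c - a)) + 2 * (a * b * c)) ^ 2
          + (3 * (b ^ 2 * (a + c - b)) + 2 * (a * b * c)) ^ 2
          + (3 * (c ^ 2 * (a + b - c)) + 2 * (a * b * c)) ^ 2)) := by positivity
    have hid : 3 * (a ^ 2 + b ^ 2 + c ^ 2) ^ 4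
        - 8 * ((a ^ 2 + a * b + b ^ 2) * ((a ^ 2 + a * c + c ^ 2) * (b ^ 2 + b * c + c ^ 2))
          * (3 * (a ^ 2 + b ^ 2 + c ^ 2) - (a + b + c) ^ 2))
        = (a + b + c) ^ 2 * (2 * (a * b * c) ^ 2
        + 2 * ((b * c * (b - c)) ^ 2 + (a * c * (c - a)) ^ 2 + (a * b * (a - b)) ^ 2)
        + (1 / 3) * ((3 * (a ^ 2 * (b + c - a)) + 2 * (a * b * c)) ^ 2
          + (3 * (b ^ 2 * (a + c - b)) + 2 * (a * b * c)) ^ 2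
          + (3 * (c ^ 2 * (a + b - c)) + 2 * (a * b * c)) ^ 2)) := by ring
    have hσ4 : (a ^ 2 + b ^ 2 + c ^ 2) ^ 4 = 1 := by rw [h]; norm_num
    have hq1 : 8 * ((a ^ 2 + a * b + b ^ 2) * ((a ^ 2 + a * c + c ^ 2) * (b ^ 2 + b * c + c ^ 2))
        * (3 * (a ^ 2 + b ^ 2 + c ^ 2) - (a + b + c) ^ 2)) ≤ 3 := by
      linarith [hsosnn, hid, hσ4]
    have h64 := chain ((a ^ 2 + a * b + b ^ 2) * ((a ^ 2 + a * c + c ^ 2)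
        * (b ^ 2 + b * c + c ^ 2))) (3 * (a ^ 2 + b ^ 2 + c ^ 2) - (a + b + c) ^ 2)
        hQ hN hN3 hq1
    have hX54 : ((a ^ 2 + a * b + b ^ 2) * ((a ^ 2 + a * c + c ^ 2) * (b ^ 2 + b * c + c ^ 2))) ^ 2
        * (3 * (a ^ 2 + b ^ 2 + c ^ 2) - (a + b + c) ^ 2) ^ 3
        - 2 * (((a ^ 2 + a * b + b ^ 2) * ((a ^ 2 + a * c + c ^ 2) * (b ^ 2 + b * c + c ^ 2))) ^ 2
        * ((a - 2 * b + c) * ((2 * a - b - c) * (a + b - 2 * c))) ^ 2) = 27 / 64 := by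
      linear_combination 54 * hX
    have hQE : ((a ^ 2 + a * b + b ^ 2) * ((a ^ 2 + a * c + c ^ 2) * (b ^ 2 + b * c + c ^ 2))) ^ 2
        * ((a - 2 * b + c) * ((2 * a - b - c) * (a + b - 2 * c))) ^ 2 ≤ 0 := by
      linarith [h64, hX54]
    have hQE0 : ((a ^ 2 + a * b + b ^ 2) * ((a ^ 2 + a * c + c ^ 2) * (b ^ 2 + b * c + c ^ 2))) ^ 2
        * ((a - 2 * b + c) * ((2 * a - b - c) * (a + b - 2 * c))) ^ 2 = 0 :=
      le_antisymm hQE (by positivity)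
    rcases mul_eq_zero.mp hQE0 with hQ0 | hE2
    · exfalso
      have h0 : (1 : ℝ) / 128 = ((a - b) * (a - c) * (b - c)) ^ 2
          * ((a ^ 2 + a * b + b ^ 2) * ((a ^ 2 + a * c + c ^ 2) * (b ^ 2 + b * c + c ^ 2))) ^ 2 := by
        linear_combination -hX
      rw [hQ0, mul_zero] at h0
      norm_num at h0
    · have hE0 : (a - 2 * b + c) * ((2 * a - b - c) * (a + b - 2 * c)) = 0 :=
        pow_eq_zero_iff (by norm_num : (2 : ℕ) ≠ 0) |>.mp hE2
      rcases mul_eq_zero.mp hE0 with hE1 | hE23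
      · -- b is the middle: b = 0, c = -a
        obtain ⟨hb0, hc0⟩ := core a b c h (by linarith) hX
        subst hb0; subst hc0
        have ha2 : a ^ 2 = 1 / 2 := by linear_combination h / 2
        exact (ms1 a).trans (ms_pattern a ha2)
      · rcases mul_eq_zero.mp hE23 with hE2' | hE3'
        · -- a is the middle: a = 0, c = -b
          have hX2 : ((b - a) * (b - c) * (a - c) * (b ^ 2 + b * a + a ^ 2)
              * (b ^ 2 + b * c + c ^ 2) * (a ^ 2 + a * c + c ^ 2)) ^ 2 = 1 / 128 := by
            linear_combination hX
          obtain ⟨ha0, hc0⟩ := core b a c (by linarith) (by linarith) hX2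
          subst ha0; subst hc0
          have hb2 : b ^ 2 = 1 / 2 := by linear_combination h / 2
          exact (ms2 b).trans (ms_pattern b hb2)
        · -- c is the middle: c = 0, b = -a
          have hX3 : ((a - c) * (a - b) * (c - b) * (a ^ 2 + a * c + c ^ 2)
              * (a ^ 2 + a * b + b ^ 2) * (c ^ 2 + c * b + b ^ 2)) ^ 2 = 1 / 128 := by
            linear_combination hX
          obtain ⟨hc0, hb0⟩ := core a c b (by linarith) (by linarith) hX3
          subst hc0; subst hb0
          have ha2 : a ^ 2 = 1 / 2 := by linear_combination h / 2
          exact ms_pattern a ha2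
  · intro hm
    have hsum : a + b + c = 0 := by
      have h1 := congrArg Multiset.sum hm
      simp only [Multiset.insert_eq_cons, Multiset.sum_cons, Multiset.sum_singleton] at h1
      linear_combination h1
    have hprod : a * b * c = 0 := by
      have h1 := congrArg Multiset.prod hm
      simp only [Multiset.insert_eq_cons, Multiset.prod_cons, Multiset.prod_singleton] at h1
      linear_combination h1
    rcases mul_eq_zero.mp hprod with hab | hc0
    · rcases mul_eq_zero.mp hab with ha0 | hb0
      · -- a = 0, c = -b
        subst ha0
        have hc : c = -b := by linarith
        subst hc
        have hb2 : b ^ 2 = 1 / 2 := by linear_combination h / 2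
        rw [show I₉ 0 b (-b) = 2 * Real.sqrt 3 * b ^ 9 / 243 from by unfold I₉; ring]
        exact abs_val b hb2
      · -- b = 0, c = -a
        subst hb0
        have hc : c = -a := by linarith
        subst hc
        have ha2 : a ^ 2 = 1 / 2 := by linear_combination h / 2
        rw [show I₉ a 0 (-a) = -(2 * Real.sqrt 3 * a ^ 9 / 243) from by unfold I₉; ring,
          abs_neg]
        exact abs_val a ha2
    · -- c = 0, b = -a
      subst hc0
      have hb : b = -a := by linarith
      subst hb
      have ha2 : a ^ 2 = 1 / 2 := by linear_combination h / 2
      rw [show I₉ a (-a) 0 = 2 * Real.sqrt 3 * a ^ 9 / 243 from by unfold I₉; ring]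
      exact abs_val a ha2
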